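/- Let Z₁ and Z₂ be independent standard normal random variables, let m ∈ ℝ, ζ₁ > 0, ζ₂ > 0, ρ ∈ [−1, 1], and set X₁ = m + ζ₁ Z₁ and X₂ = m + ζ₂ (ρ Z₁ + √(1 − ρ²) Z₂), so that c := Cov(X₁, X₂) = ρ ζ₁ ζ₂. Then for any thresholds θ₁ > 0 and θ₂ > 0, E[(η(X₁; θ₁) − m)(η(X₂; θ₂) − m)] = −c + E[(η(X₁; θ₁) − X₁)(η(X₂; θ₂) − X₂)] + c · ( P(|X₁| ≥ θ₁) + P(|X₂| ≥ θ₂) ). -/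

import Mathlib

open MeasureTheory ProbabilityTheory

/-- The soft-thresholding function `η(x; θ) = sign(x)·max(|x| − θ, 0)`. -/
noncomputable def softThresh (x θ : ℝ) : ℝ := Real.sign x * max (|x| - θ) 0

open Filter Topology Set
open scoped NNReal ENNReal

/-!
Write `η(x; θ) - m = (η(x; θ) - x) + (x - m)` and expand the product. Both `X₁ - m` and `X₂ - m`
are linear forms in the independent standard Gaussians `Z₁, Z₂`, with covariance `c`, so Gaussian
integration by parts (Stein's lemma) gives `E[(Xᵢ - m) h(Xⱼ)] = c E[h'(Xⱼ)]` for bounded, piecewise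
differentiable `h`. The residual `h = η(·; θ) - id` has `h' = 1{|x| ≥ θ} - 1` away from `±θ`, so
each cross term equals `c (P(|Xⱼ| ≥ θⱼ) - 1)`, while `E[(X₁ - m)(X₂ - m)] = c`.
Stein's lemma is integration by parts against the Gaussian density `φ`, whose derivative is
`-(x - μ) φ / v`, with a fundamental theorem of calculus that allows countably many kinks.
-/

section SoftThreshold

variable {x θ : ℝ}

theorem softThresh_of_lt (hθ : 0 ≤ θ) (h : θ < x) : softThresh x θ = x - θ := by
  rw [softThresh, Real.sign_of_pos (by linarith), abs_of_pos (by linarith),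
    max_eq_left (by linarith), one_mul]

theorem softThresh_of_lt_neg (hθ : 0 ≤ θ) (h : x < -θ) : softThresh x θ = x + θ := by
  rw [softThresh, Real.sign_of_neg (by linarith), abs_of_neg (by linarith),
    max_eq_left (by linarith)]
  ring

theorem softThresh_of_abs_le (h : |x| ≤ θ) : softThresh x θ = 0 := by
  rw [softThresh, max_eq_right (by linarith), mul_zero]

theorem softThresh_eq_sub_max_min (hθ : 0 ≤ θ) (x : ℝ) :
    softThresh x θ = x - max (-θ) (min x θ) := by
  rcases lt_or_ge θ x with h | h
  · rw [softThresh_of_lt hθ h, min_eq_right h.le, max_eq_right (by linarith)]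
  rcases lt_or_ge x (-θ) with h' | h'
  · rw [softThresh_of_lt_neg hθ h', min_eq_left h, max_eq_left h'.le]
    ring
  · rw [softThresh_of_abs_le (abs_le.2 ⟨h', h⟩), min_eq_left h, max_eq_right h', sub_self]

theorem continuous_softThresh (hθ : 0 ≤ θ) : Continuous (softThresh · θ) := by
  simp only [softThresh_eq_sub_max_min hθ]
  fun_prop

theorem abs_softThresh_sub_self_le (hθ : 0 ≤ θ) (x : ℝ) : |softThresh x θ - x| ≤ θ := by
  rw [softThresh_eq_sub_max_min hθ, sub_sub_cancel_left, abs_neg, abs_le]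
  exact ⟨le_max_left _ _, max_le (by linarith) (min_le_right _ _)⟩

theorem hasDerivAt_softThresh (hθ : 0 ≤ θ) (hx : |x| ≠ θ) :
    HasDerivAt (softThresh · θ) ({y | θ ≤ |y|}.indicator 1 x) x := by
  rcases hx.lt_or_gt with hx | hx
  · rw [indicator_of_notMem (by simpa using hx)]
    refine (hasDerivAt_const x 0).congr_of_eventuallyEq ?_
    filter_upwards [(continuous_abs.tendsto x).eventually (gt_mem_nhds hx)] with y hy
    exact softThresh_of_abs_le hy.le
  rw [indicator_of_mem (by simpa using hx.le), Pi.one_apply]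
  rcases lt_abs.1 hx with hx | hx
  · refine ((hasDerivAt_id' x).sub_const θ).congr_of_eventuallyEq ?_
    filter_upwards [lt_mem_nhds hx] with y hy
    exact softThresh_of_lt hθ hy
  · refine ((hasDerivAt_id' x).add_const θ).congr_of_eventuallyEq ?_
    filter_upwards [gt_mem_nhds (lt_neg.1 hx)] with y hy
    exact softThresh_of_lt_neg hθ hy

end SoftThreshold

theorem hasDerivAt_gaussianPDFReal (μ : ℝ) (v : ℝ≥0) (x : ℝ) :
    HasDerivAt (gaussianPDFReal μ v) (-((x - μ) / v) * gaussianPDFReal μ v x) x := by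
  have h := (((hasDerivAt_id' x).sub_const μ).fun_pow 2).fun_neg.div_const (2 * (v : ℝ))
  rw [gaussianPDFReal_def]
  exact (h.exp.const_mul _).congr_deriv (by ring)

theorem tendsto_gaussianPDFReal_cocompact (μ : ℝ) (v : ℝ≥0) :
    Tendsto (gaussianPDFReal μ v) (cocompact ℝ) (𝓝 0) := by
  rcases eq_or_ne v 0 with rfl | hv
  · rw [gaussianPDFReal_zero_var]
    exact tendsto_const_nhds
  have hsq : Tendsto (fun x : ℝ => -(x - μ) ^ 2 / (2 * v)) (cocompact ℝ) atBot := by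
    refine (tendsto_neg_atTop_atBot.comp ?_).atBot_div_const (by positivity)
    simpa only [Real.dist_eq, Function.comp_def, sq_abs] using
      (tendsto_pow_atTop two_ne_zero).comp (tendsto_dist_right_cocompact_atTop μ)
  simpa [gaussianPDFReal_def] using
    (Real.tendsto_exp_atBot.comp hsq).const_mul (Real.sqrt (2 * Real.pi * v))⁻¹

theorem integral_of_hasDerivAt_off_countable_of_tendsto {f f' : ℝ → ℝ} {s : Set ℝ} {m n : ℝ}
    (hs : s.Countable) (hf : Continuous f) (hderiv : ∀ x ∉ s, HasDerivAt f (f' x) x)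
    (hf' : Integrable f') (hbot : Tendsto f atBot (𝓝 m)) (htop : Tendsto f atTop (𝓝 n)) :
    ∫ x, f' x = n - m := by
  have hFTC (x : ℝ) : ∫ y in -x..x, f' y = f x - f (-x) :=
    integral_eq_of_hasDerivAt_off_countable f f' hs hf.continuousOn
      (fun y hy => hderiv y hy.2) hf'.intervalIntegrable
  refine tendsto_nhds_unique (intervalIntegral_tendsto_integral hf' tendsto_neg_atTop_atBot
    tendsto_id) ?_
  simpa only [id, hFTC, Function.comp_def] using htop.sub (hbot.comp tendsto_neg_atTop_atBot)

theorem integrable_gaussianReal_iff {μ : ℝ} {v : ℝ≥0} (hv : v ≠ 0) {f : ℝ → ℝ} :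
    Integrable f (gaussianReal μ v) ↔ Integrable (fun x => gaussianPDFReal μ v x * f x) := by
  rw [gaussianReal_of_var_ne_zero _ hv, integrable_withDensity_iff_integrable_smul'
    (measurable_gaussianPDF _ _) (ae_of_all _ fun _ => gaussianPDF_lt_top)]
  simp only [toReal_gaussianPDF, smul_eq_mul]

theorem integral_sub_mul_eq_integral_deriv_gaussianReal {μ : ℝ} {v : ℝ≥0} (hv : v ≠ 0)
    {f f' : ℝ → ℝ} {s : Set ℝ} {C : ℝ} (hs : s.Countable) (hf : Continuous f)
    (hf_bdd : ∀ x, |f x| ≤ C) (hderiv : ∀ x ∉ s, HasDerivAt f (f' x) x)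
    (hf' : Integrable f' (gaussianReal μ v)) :
    ∫ x, (x - μ) * f x ∂gaussianReal μ v = v * ∫ x, f' x ∂gaussianReal μ v := by
  set p := gaussianPDFReal μ v
  have hlin : Integrable (fun x => (x - μ) * f x) (gaussianReal μ v) :=
    (((memLp_id_gaussianReal 1).integrable le_rfl).sub (integrable_const μ)).mul_bdd
      hf.aestronglyMeasurable (ae_of_all _ hf_bdd)
  rw [integrable_gaussianReal_iff hv] at hf' hlin
  have hbdd : IsBoundedUnder (· ≤ ·) (cocompact ℝ) (norm ∘ f) := isBoundedUnder_of ⟨C, hf_bdd⟩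
  have hlim := isBoundedUnder_le_mul_tendsto_zero hbdd (tendsto_gaussianPDFReal_cocompact μ v)
  have hparts := integral_of_hasDerivAt_off_countable_of_tendsto (f := fun x => v * (f x * p x))
    (f' := fun x => v * (p x * f' x) - p x * ((x - μ) * f x)) hs
    (continuous_const.mul (hf.mul (continuous_iff_continuousAt.2 fun x =>
      (hasDerivAt_gaussianPDFReal μ v x).continuousAt)))
    (fun x hx => ((hderiv x hx).mul (hasDerivAt_gaussianPDFReal μ v x)).const_mul _ |>.congr_deriv
      (by field_simp; ring))
    ((hf'.const_mul v).sub hlin)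
    (by simpa using (hlim.mono_left atBot_le_cocompact).const_mul (v : ℝ))
    (by simpa using (hlim.mono_left atTop_le_cocompact).const_mul (v : ℝ))
  rw [integral_sub (hf'.const_mul v) hlin, sub_self, sub_eq_zero, integral_const_mul] at hparts
  simpa only [integral_gaussianReal_eq_integral_smul hv, smul_eq_mul] using hparts.symm

theorem integral_mul_comp_affine_gaussianReal {f f' : ℝ → ℝ} {s : Set ℝ} {C C' : ℝ}
    (hs : s.Countable) (hf : Continuous f) (hf_bdd : ∀ x, |f x| ≤ C)
    (hderiv : ∀ x ∉ s, HasDerivAt f (f' x) x) (hf'm : Measurable f') (hf'_bdd : ∀ x, |f' x| ≤ C')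
    (a b : ℝ) :
    ∫ z, z * f (a + b * z) ∂gaussianReal 0 1 = b * ∫ z, f' (a + b * z) ∂gaussianReal 0 1 := by
  rcases eq_or_ne b 0 with rfl | hb
  · simp [integral_mul_const, integral_id_gaussianReal]
  have hinj : Function.Injective fun z => a + b * z :=
    (add_right_injective a).comp (mul_right_injective₀ hb)
  have hint : Integrable (fun z => b * f' (a + b * z)) (gaussianReal 0 1) :=
    .of_bound ((hf'm.comp (by fun_prop)).const_mul b).aestronglyMeasurable (|b| * C')
      (ae_of_all _ fun z => by
        simpa [abs_mul] using mul_le_mul_of_nonneg_left (hf'_bdd (a + b * z)) (abs_nonneg b))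
  simpa [integral_const_mul] using
    integral_sub_mul_eq_integral_deriv_gaussianReal (μ := 0) one_ne_zero
      (f := fun z => f (a + b * z)) (hs.preimage hinj) (hf.comp (by fun_prop))
      (fun z => hf_bdd _)
      (fun z hz => ((hderiv _ hz).comp z (((hasDerivAt_id z).const_mul b).const_add a)).congr_deriv
        (by simp [mul_comm])) hint

section

variable {Ω : Type*} [MeasurableSpace Ω] {P : Measure Ω}

theorem integral_add_mul_add {R₁ R₂ U₁ U₂ : Ω → ℝ} (hR₁ : MemLp R₁ 2 P) (hR₂ : MemLp R₂ 2 P)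
    (hU₁ : MemLp U₁ 2 P) (hU₂ : MemLp U₂ 2 P) :
    ∫ ω, (R₁ ω + U₁ ω) * (R₂ ω + U₂ ω) ∂P
      = ∫ ω, R₁ ω * R₂ ω ∂P + ∫ ω, U₁ ω * R₂ ω ∂P + ∫ ω, U₂ ω * R₁ ω ∂P
        + ∫ ω, U₁ ω * U₂ ω ∂P := by
  have hRR : Integrable (fun ω => R₁ ω * R₂ ω) P := hR₁.integrable_mul hR₂
  have hUR : Integrable (fun ω => U₁ ω * R₂ ω) P := hU₁.integrable_mul hR₂
  have hUR' : Integrable (fun ω => U₂ ω * R₁ ω) P := hU₂.integrable_mul hR₁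
  have hUU : Integrable (fun ω => U₁ ω * U₂ ω) P := hU₁.integrable_mul hU₂
  rw [← integral_add hRR hUR, ← integral_add (hRR.fun_add hUR) hUR',
    ← integral_add ((hRR.fun_add hUR).fun_add hUR') hUU]
  congr 1 with ω
  ring

theorem memLp_softThresh_sub [IsFiniteMeasure P] {X : Ω → ℝ} (hX : AEMeasurable X P) {θ : ℝ}
    (hθ : 0 ≤ θ) (p : ℝ≥0∞) : MemLp (fun ω => softThresh (X ω) θ - X ω) p P :=
  .of_bound (((continuous_softThresh hθ).sub continuous_id).comp_aestronglyMeasurable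
    hX.aestronglyMeasurable) θ (ae_of_all _ fun ω => abs_softThresh_sub_self_le hθ (X ω))

theorem ProbabilityTheory.HasLaw.memLp_gaussianReal {Z : Ω → ℝ} {μ : ℝ} {v : ℝ≥0}
    (h : HasLaw Z (gaussianReal μ v) P) {p : ℝ≥0∞} (hp : p ≠ ∞) : MemLp Z p P := by
  have := memLp_id_gaussianReal' (μ := μ) (v := v) p hp
  rwa [← h.map_eq, memLp_map_measure_iff aestronglyMeasurable_id h.aemeasurable] at this

theorem ProbabilityTheory.HasLaw.integral_sq_gaussianReal {Z : Ω → ℝ} {v : ℝ≥0}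
    (h : HasLaw Z (gaussianReal 0 v) P) : ∫ ω, Z ω ^ 2 ∂P = v := by
  rw [← variance_of_integral_eq_zero h.aemeasurable (h.integral_eq.trans integral_id_gaussianReal),
    h.variance_eq, variance_id_gaussianReal]

variable {Z₁ Z₂ : Ω → ℝ}

theorem integral_mul_comp_of_indep_gaussian (h₁ : HasLaw Z₁ (gaussianReal 0 1) P)
    (h₂ : HasLaw Z₂ (gaussianReal 0 1) P) (hind : Z₁ ⟂ᵢ[P] Z₂)
    {f f' : ℝ → ℝ} {s : Set ℝ} {C C' : ℝ}
    (hs : s.Countable) (hf : Continuous f) (hf_bdd : ∀ x, |f x| ≤ C)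
    (hderiv : ∀ x ∉ s, HasDerivAt f (f' x) x) (hf'm : Measurable f') (hf'_bdd : ∀ x, |f' x| ≤ C')
    (a b₁ b₂ : ℝ) :
    ∫ ω, Z₁ ω * f (a + b₁ * Z₁ ω + b₂ * Z₂ ω) ∂P
      = b₁ * ∫ ω, f' (a + b₁ * Z₁ ω + b₂ * Z₂ ω) ∂P := by
  have := h₁.isProbabilityMeasure
  set γ := gaussianReal 0 1
  have hZ := hind.hasLaw_prod h₁ h₂
  have hfL : Continuous fun p : ℝ × ℝ => f (a + b₁ * p.1 + b₂ * p.2) := hf.comp (by fun_prop)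
  have hf'L : Measurable fun p : ℝ × ℝ => f' (a + b₁ * p.1 + b₂ * p.2) := hf'm.comp (by fun_prop)
  have hint : Integrable (fun p : ℝ × ℝ => p.1 * f (a + b₁ * p.1 + b₂ * p.2)) (γ.prod γ) :=
    (((memLp_id_gaussianReal 1).integrable le_rfl).comp_fst γ).mul_bdd
      hfL.aestronglyMeasurable (ae_of_all _ fun p => hf_bdd _)
  have hint' : Integrable (fun p : ℝ × ℝ => f' (a + b₁ * p.1 + b₂ * p.2)) (γ.prod γ) :=
    .of_bound hf'L.aestronglyMeasurable C' (ae_of_all _ fun p => hf'_bdd _)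
  have hslice (y : ℝ) : ∫ x, x * f (a + b₁ * x + b₂ * y) ∂γ
      = b₁ * ∫ x, f' (a + b₁ * x + b₂ * y) ∂γ := by
    simpa only [add_right_comm _ (b₂ * y)] using
      integral_mul_comp_affine_gaussianReal hs hf hf_bdd hderiv hf'm hf'_bdd (a + b₂ * y) b₁
  calc ∫ ω, Z₁ ω * f (a + b₁ * Z₁ ω + b₂ * Z₂ ω) ∂P
      = ∫ p, p.1 * f (a + b₁ * p.1 + b₂ * p.2) ∂(γ.prod γ) :=
        hZ.integral_comp (f := fun p : ℝ × ℝ => p.1 * f (a + b₁ * p.1 + b₂ * p.2))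
          (by fun_prop)
    _ = b₁ * ∫ p, f' (a + b₁ * p.1 + b₂ * p.2) ∂(γ.prod γ) := by
        rw [integral_prod_symm _ hint, integral_prod_symm _ hint', ← integral_const_mul]
        simp only [hslice]
    _ = b₁ * ∫ ω, f' (a + b₁ * Z₁ ω + b₂ * Z₂ ω) ∂P := by
        congr 1
        exact (hZ.integral_comp (f := fun p : ℝ × ℝ => f' (a + b₁ * p.1 + b₂ * p.2))
          hf'L.aestronglyMeasurable).symm

theorem memLp_of_eq_linear_gaussian {μ₁ μ₂ : ℝ} {v₁ v₂ : ℝ≥0}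
    (h₁ : HasLaw Z₁ (gaussianReal μ₁ v₁) P) (h₂ : HasLaw Z₂ (gaussianReal μ₂ v₂) P)
    {U : Ω → ℝ} {a₁ a₂ : ℝ} (hU : ∀ ω, U ω = a₁ * Z₁ ω + a₂ * Z₂ ω) {p : ℝ≥0∞} (hp : p ≠ ∞) :
    MemLp U p P := by
  rw [show U = _ from funext hU]
  exact ((h₁.memLp_gaussianReal hp).const_mul a₁).add ((h₂.memLp_gaussianReal hp).const_mul a₂)

theorem integral_linear_mul_linear_of_indep_gaussian (h₁ : HasLaw Z₁ (gaussianReal 0 1) P)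
    (h₂ : HasLaw Z₂ (gaussianReal 0 1) P) (hind : Z₁ ⟂ᵢ[P] Z₂) {U V : Ω → ℝ}
    {a₁ a₂ b₁ b₂ : ℝ} (hU : ∀ ω, U ω = a₁ * Z₁ ω + a₂ * Z₂ ω)
    (hV : ∀ ω, V ω = b₁ * Z₁ ω + b₂ * Z₂ ω) :
    ∫ ω, U ω * V ω ∂P = a₁ * b₁ + a₂ * b₂ := by
  have hm₁ : MemLp Z₁ 2 P := h₁.memLp_gaussianReal ENNReal.ofNat_ne_top
  have hm₂ : MemLp Z₂ 2 P := h₂.memLp_gaussianReal ENNReal.ofNat_ne_top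
  have hcross : ∫ ω, Z₁ ω * Z₂ ω ∂P = 0 := by
    simpa [h₁.integral_eq, integral_id_gaussianReal] using
      hind.integral_mul_eq_mul_integral h₁.aemeasurable.aestronglyMeasurable
        h₂.aemeasurable.aestronglyMeasurable
  have hsq₁ : Integrable (fun ω => Z₁ ω ^ 2) P := hm₁.integrable_sq
  have hsq₂ : Integrable (fun ω => Z₂ ω ^ 2) P := hm₂.integrable_sq
  have hprod : Integrable (fun ω => Z₁ ω * Z₂ ω) P := hm₁.integrable_mul hm₂
  calc ∫ ω, U ω * V ω ∂P
      = ∫ ω, (a₁ * b₁ * Z₁ ω ^ 2 + (a₁ * b₂ + a₂ * b₁) * (Z₁ ω * Z₂ ω)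
          + a₂ * b₂ * Z₂ ω ^ 2) ∂P := by
        simp only [hU, hV]
        congr 1; ext ω; ring
    _ = a₁ * b₁ + a₂ * b₂ := by
        rw [integral_add ((hsq₁.const_mul _).fun_add (hprod.const_mul _)) (hsq₂.const_mul _),
          integral_add (hsq₁.const_mul _) (hprod.const_mul _),
          integral_const_mul, integral_const_mul, integral_const_mul, h₁.integral_sq_gaussianReal,
          h₂.integral_sq_gaussianReal, hcross]
        simp

theorem integral_linear_mul_comp_of_indep_gaussian (h₁ : HasLaw Z₁ (gaussianReal 0 1) P)
    (h₂ : HasLaw Z₂ (gaussianReal 0 1) P) (hind : Z₁ ⟂ᵢ[P] Z₂)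
    {f f' : ℝ → ℝ} {s : Set ℝ} {C C' : ℝ}
    (hs : s.Countable) (hf : Continuous f) (hf_bdd : ∀ x, |f x| ≤ C)
    (hderiv : ∀ x ∉ s, HasDerivAt f (f' x) x) (hf'm : Measurable f') (hf'_bdd : ∀ x, |f' x| ≤ C')
    {U V : Ω → ℝ} {a₁ a₂ a b₁ b₂ : ℝ} (hU : ∀ ω, U ω = a₁ * Z₁ ω + a₂ * Z₂ ω)
    (hV : ∀ ω, V ω = a + b₁ * Z₁ ω + b₂ * Z₂ ω) :
    ∫ ω, U ω * f (V ω) ∂P = (a₁ * b₁ + a₂ * b₂) * ∫ ω, f' (V ω) ∂P := by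
  have := h₁.isProbabilityMeasure
  have e₁ := integral_mul_comp_of_indep_gaussian h₁ h₂ hind hs hf hf_bdd hderiv hf'm
    hf'_bdd a b₁ b₂
  have e₂ := integral_mul_comp_of_indep_gaussian h₂ h₁ hind.symm hs hf hf_bdd hderiv hf'm
    hf'_bdd a b₂ b₁
  simp only [add_right_comm _ (b₂ * _)] at e₂
  have hZ₁m := h₁.aemeasurable
  have hZ₂m := h₂.aemeasurable
  have hfV : AEStronglyMeasurable (fun ω => f (a + b₁ * Z₁ ω + b₂ * Z₂ ω)) P :=
    hf.comp_aestronglyMeasurable (by fun_prop)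
  have hint₁ : Integrable (fun ω => Z₁ ω * f (a + b₁ * Z₁ ω + b₂ * Z₂ ω)) P :=
    ((h₁.memLp_gaussianReal ENNReal.one_ne_top).integrable le_rfl).mul_bdd hfV
      (ae_of_all _ fun ω => hf_bdd _)
  have hint₂ : Integrable (fun ω => Z₂ ω * f (a + b₁ * Z₁ ω + b₂ * Z₂ ω)) P :=
    ((h₂.memLp_gaussianReal ENNReal.one_ne_top).integrable le_rfl).mul_bdd hfV
      (ae_of_all _ fun ω => hf_bdd _)
  simp only [hU, hV, add_mul, mul_assoc]
  rw [integral_add (hint₁.const_mul a₁) (hint₂.const_mul a₂), integral_const_mul,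
    integral_const_mul, e₁, e₂]

theorem integral_mul_softThresh_sub_of_indep_gaussian (h₁ : HasLaw Z₁ (gaussianReal 0 1) P)
    (h₂ : HasLaw Z₂ (gaussianReal 0 1) P) (hind : Z₁ ⟂ᵢ[P] Z₂) {θ : ℝ} (hθ : 0 ≤ θ)
    {U V : Ω → ℝ} {a₁ a₂ a b₁ b₂ : ℝ} (hU : ∀ ω, U ω = a₁ * Z₁ ω + a₂ * Z₂ ω)
    (hV : ∀ ω, V ω = a + b₁ * Z₁ ω + b₂ * Z₂ ω) :
    ∫ ω, U ω * (softThresh (V ω) θ - V ω) ∂P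
      = (a₁ * b₁ + a₂ * b₂) * ((P {ω | θ ≤ |V ω|}).toReal - 1) := by
  have := h₁.isProbabilityMeasure
  have hderiv (x : ℝ) (hx : x ∉ ({θ, -θ} : Set ℝ)) :
      HasDerivAt (fun y => softThresh y θ - y) ({y | θ ≤ |y|}.indicator 1 x - 1) x := by
    refine (hasDerivAt_softThresh hθ fun h => hx ?_).sub (hasDerivAt_id x)
    rcases (abs_eq hθ).1 h with h | h <;> simp [h]
  have hf'm : Measurable fun x => {y : ℝ | θ ≤ |y|}.indicator 1 x - (1 : ℝ) :=
    (measurable_const.indicator (measurableSet_le measurable_const measurable_abs)).sub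
      measurable_const
  rw [integral_linear_mul_comp_of_indep_gaussian (f := fun x => softThresh x θ - x) h₁ h₂ hind
    (Set.toFinite _).countable
    ((continuous_softThresh hθ).sub continuous_id) (abs_softThresh_sub_self_le hθ) hderiv
    hf'm (C' := 1) (fun x => ?_) hU hV]
  · congr 1
    have hVm : AEMeasurable V P := by
      have := h₁.aemeasurable
      have := h₂.aemeasurable
      rw [show V = _ from funext hV]
      fun_prop
    have hS : NullMeasurableSet {ω | θ ≤ |V ω|} P := nullMeasurableSet_le aemeasurable_const hVm.abs
    change ∫ ω, ({ω | θ ≤ |V ω|}.indicator 1 ω - 1) ∂P = _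
    rw [integral_sub ((integrable_const 1).indicator₀ hS) (integrable_const 1),
      integral_indicator₀ hS]
    simp [measureReal_def]
  · by_cases h : θ ≤ |x| <;> simp [h]

end

theorem soft_threshold_covariance_identity_general
    {Ω : Type*} [MeasureSpace Ω] [IsProbabilityMeasure (volume : Measure Ω)]
    (Z₁ Z₂ : Ω → ℝ) (hZ₁m : Measurable Z₁) (hZ₂m : Measurable Z₂)
    (hZ₁ : Measure.map Z₁ volume = gaussianReal 0 1)
    (hZ₂ : Measure.map Z₂ volume = gaussianReal 0 1)
    (hindep : IndepFun Z₁ Z₂ volume)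
    (m ζ₁ ζ₂ ρ : ℝ)
    (X₁ X₂ : Ω → ℝ)
    (hX₁ : ∀ ω, X₁ ω = m + ζ₁ * Z₁ ω)
    (hX₂ : ∀ ω, X₂ ω = m + ζ₂ * (ρ * Z₁ ω + Real.sqrt (1 - ρ ^ 2) * Z₂ ω))
    (c : ℝ) (hc : c = ρ * ζ₁ * ζ₂)
    (θ₁ θ₂ : ℝ) (hθ₁ : 0 < θ₁) (hθ₂ : 0 < θ₂) :
    ∫ ω, (softThresh (X₁ ω) θ₁ - m) * (softThresh (X₂ ω) θ₂ - m)
      = -c + (∫ ω, (softThresh (X₁ ω) θ₁ - X₁ ω) * (softThresh (X₂ ω) θ₂ - X₂ ω))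
        + c * ((volume {ω | θ₁ ≤ |X₁ ω|}).toReal + (volume {ω | θ₂ ≤ |X₂ ω|}).toReal) := by
  have h₁ : HasLaw Z₁ (gaussianReal 0 1) := ⟨hZ₁m.aemeasurable, hZ₁⟩
  have h₂ : HasLaw Z₂ (gaussianReal 0 1) := ⟨hZ₂m.aemeasurable, hZ₂⟩
  set s := √(1 - ρ ^ 2)
  have hU₁ (ω : Ω) : X₁ ω - m = ζ₁ * Z₁ ω + 0 * Z₂ ω := by rw [hX₁]; ring
  have hU₂ (ω : Ω) : X₂ ω - m = ζ₂ * ρ * Z₁ ω + ζ₂ * s * Z₂ ω := by rw [hX₂]; ring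
  have hV₁ (ω : Ω) : X₁ ω = m + ζ₁ * Z₁ ω + 0 * Z₂ ω := by rw [hX₁]; ring
  have hV₂ (ω : Ω) : X₂ ω = m + ζ₂ * ρ * Z₁ ω + ζ₂ * s * Z₂ ω := by rw [hX₂]; ring
  have hX₁m : Measurable X₁ := by rw [funext hX₁]; fun_prop
  have hX₂m : Measurable X₂ := by rw [funext hX₂]; fun_prop
  calc ∫ ω, (softThresh (X₁ ω) θ₁ - m) * (softThresh (X₂ ω) θ₂ - m)
      = ∫ ω, ((softThresh (X₁ ω) θ₁ - X₁ ω) + (X₁ ω - m))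
          * ((softThresh (X₂ ω) θ₂ - X₂ ω) + (X₂ ω - m)) := by
        simp only [sub_add_sub_cancel]
    _ = -c + (∫ ω, (softThresh (X₁ ω) θ₁ - X₁ ω) * (softThresh (X₂ ω) θ₂ - X₂ ω))
        + c * ((volume {ω | θ₁ ≤ |X₁ ω|}).toReal + (volume {ω | θ₂ ≤ |X₂ ω|}).toReal) := by
        rw [integral_add_mul_add (memLp_softThresh_sub hX₁m.aemeasurable hθ₁.le 2)
            (memLp_softThresh_sub hX₂m.aemeasurable hθ₂.le 2)
            (memLp_of_eq_linear_gaussian h₁ h₂ hU₁ ENNReal.ofNat_ne_top)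
            (memLp_of_eq_linear_gaussian h₁ h₂ hU₂ ENNReal.ofNat_ne_top),
          integral_mul_softThresh_sub_of_indep_gaussian h₁ h₂ hindep hθ₂.le hU₁ hV₂,
          integral_mul_softThresh_sub_of_indep_gaussian h₁ h₂ hindep hθ₁.le hU₂ hV₁,
          integral_linear_mul_linear_of_indep_gaussian h₁ h₂ hindep hU₁ hU₂, hc]
        ring

theorem soft_threshold_covariance_identity
    {Ω : Type*} [MeasureSpace Ω] [IsProbabilityMeasure (volume : Measure Ω)]
    (Z₁ Z₂ : Ω → ℝ) (hZ₁m : Measurable Z₁) (hZ₂m : Measurable Z₂)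
    (hZ₁ : Measure.map Z₁ volume = gaussianReal 0 1)
    (hZ₂ : Measure.map Z₂ volume = gaussianReal 0 1)
    (hindep : IndepFun Z₁ Z₂ volume)
    (m ζ₁ ζ₂ ρ : ℝ) (hζ₁ : 0 < ζ₁) (hζ₂ : 0 < ζ₂) (hρ₁ : -1 ≤ ρ) (hρ₂ : ρ ≤ 1)
    (X₁ X₂ : Ω → ℝ)
    (hX₁ : ∀ ω, X₁ ω = m + ζ₁ * Z₁ ω)
    (hX₂ : ∀ ω, X₂ ω = m + ζ₂ * (ρ * Z₁ ω + Real.sqrt (1 - ρ ^ 2) * Z₂ ω))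
    (c : ℝ) (hc : c = ρ * ζ₁ * ζ₂)
    (θ₁ θ₂ : ℝ) (hθ₁ : 0 < θ₁) (hθ₂ : 0 < θ₂) :
    ∫ ω, (softThresh (X₁ ω) θ₁ - m) * (softThresh (X₂ ω) θ₂ - m)
      = -c + (∫ ω, (softThresh (X₁ ω) θ₁ - X₁ ω) * (softThresh (X₂ ω) θ₂ - X₂ ω))
        + c * ((volume {ω | θ₁ ≤ |X₁ ω|}).toReal + (volume {ω | θ₂ ≤ |X₂ ω|}).toReal) :=
  soft_threshold_covariance_identity_general Z₁ Z₂ hZ₁m hZ₂m hZ₁ hZ₂ hindep m ζ₁ ζ₂ ρ X₁ X₂ hX₁ hX₂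
    c hc θ₁ θ₂ hθ₁ hθ₂
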